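/- Let Φ_2(s,t;ρ) be the CDF of the standard bivariate normal with correlation ρ, |ρ| < 1. Then ∂Φ_2(s,t;ρ)/∂ρ = φ_2(s,t;ρ), the standard bivariate normal density evaluated at (s,t) (Plackett's formula). -/

import Mathlib

open MeasureTheory

/-- Standard bivariate normal density with correlation `ρ`. -/
noncomputable def phi2 (ρ x y : ℝ) : ℝ :=
  (2 * Real.pi * Real.sqrt (1 - ρ^2))⁻¹ *
    Real.exp (-(x^2 - 2*ρ*x*y + y^2) / (2*(1 - ρ^2)))

/-- Standard bivariate normal CDF with correlation `ρ`. -/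
noncomputable def Phi2 (ρ s t : ℝ) : ℝ :=
  ∫ x in Set.Iic s, ∫ y in Set.Iic t, phi2 ρ x y

/-!
Completing the square, `φ₂(x, y; ρ) = φ(x) φ((y - ρx)/√(1-ρ²)) / √(1-ρ²)`, so the inner integral
of `Φ₂` is `φ(x) Φ((t - ρx)/√(1-ρ²))`. Its `ρ`-derivative is `φ₂(x, t; ρ) (ρt - x)/(1-ρ²)`, which is
also `∂ₓ φ₂(x, t; ρ)`. For `ρ` in a compact subinterval of `(-1, 1)` this derivative is dominated
by `C (|t| + |x|) e^{-x²/2}`, so one may differentiate under the outer integral, and integrating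
`∂ₓ φ₂(x, t; ρ)` over `(-∞, s]` leaves `φ₂(s, t; ρ)`.
-/

open Real Set Filter Topology ProbabilityTheory

section IntegralIic

variable {E : Type*} [NormedAddCommGroup E] [NormedSpace ℝ E]

theorem hasDerivAt_integral_Iic [CompleteSpace E] {f : ℝ → E} (hf : Integrable f) {u : ℝ}
    (hu : ContinuousAt f u) : HasDerivAt (fun u => ∫ y in Iic u, f y) (f u) u := by
  have hsplit : (fun v => ∫ y in Iic v, f y) = fun v => (∫ y in Iic 0, f y) + ∫ y in 0..v, f y := by
    ext v
    rw [← intervalIntegral.integral_Iic_sub_Iic hf.integrableOn hf.integrableOn, add_sub_cancel]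
  rw [hsplit]
  exact (intervalIntegral.integral_hasDerivAt_right hf.intervalIntegrable
    hf.aestronglyMeasurable.stronglyMeasurableAtFilter hu).const_add _

theorem integral_Iic_comp_sub_div (f : ℝ → E) {c : ℝ} (hc : 0 < c) (b t : ℝ) :
    ∫ y in Iic t, f ((y - b) / c) = c • ∫ u in Iic ((t - b) / c), f u := by
  have himage : (fun u => c * u + b) '' Iic ((t - b) / c) = Iic t := by
    rw [show (fun u => c * u + b) = (· + b) ∘ (c * ·) from rfl, image_comp, image_mul_left_Iic hc,
      image_add_right, preimage_add_const_Iic, sub_neg_eq_add, mul_div_cancel₀ _ hc.ne',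
      sub_add_cancel]
  have hderiv (u : ℝ) : HasDerivAt (fun u => c * u + b) c u := by
    simpa using ((hasDerivAt_id u).const_mul c).add_const b
  rw [← himage, integral_image_eq_integral_abs_deriv_smul measurableSet_Iic
    (fun u _ => (hderiv u).hasDerivWithinAt) (fun u _ v _ h => by simpa [hc.ne'] using h),
    ← integral_smul]
  simp [abs_of_pos hc, hc.ne']

end IntegralIic

theorem one_sub_sq_pos_of_abs_lt_one {r : ℝ} (hr : |r| < 1) : 0 < 1 - r^2 := by
  rwa [sub_pos, sq_lt_one_iff_abs_lt_one]

theorem hasDerivAt_sub_mul_div_sqrt_one_sub_sq (t x : ℝ) {r : ℝ} (hr : |r| < 1) :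
    HasDerivAt (fun r => (t - r*x) / √(1 - r^2)) ((r*t - x) / ((1 - r^2) * √(1 - r^2))) r := by
  have h := one_sub_sq_pos_of_abs_lt_one hr
  have hsqrt : HasDerivAt (fun r => √(1 - r^2)) (-(2*r) / (2 * √(1 - r^2))) r := by
    simpa using ((hasDerivAt_pow 2 r).const_sub 1).sqrt h.ne'
  refine (((hasDerivAt_id' r).mul_const x).const_sub t |>.div hsqrt (sqrt_pos.2 h).ne').congr_deriv ?_
  field_simp
  linear_combination (r^2*x - r*t) * sq_sqrt h.le

theorem integrable_add_abs_mul_exp_neg_mul_sq (t : ℝ) {b : ℝ} (hb : 0 < b) :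
    Integrable fun x : ℝ => (|t| + |x|) * exp (-b * x^2) := by
  refine (((integrable_exp_neg_mul_sq hb).const_mul |t|).add
    (integrable_mul_exp_neg_mul_sq hb).abs).congr (ae_of_all _ fun x => ?_)
  simp only [Pi.add_apply, abs_mul, abs_exp]
  ring

section GaussianPDFReal

theorem continuous_gaussianPDFReal (μ : ℝ) (v : NNReal) : Continuous (gaussianPDFReal μ v) := by
  unfold gaussianPDFReal
  fun_prop

theorem hasDerivAt_integral_Iic_gaussianPDFReal (μ : ℝ) (v : NNReal) (u : ℝ) :
    HasDerivAt (fun u => ∫ y in Iic u, gaussianPDFReal μ v y) (gaussianPDFReal μ v u) u :=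
  hasDerivAt_integral_Iic (integrable_gaussianPDFReal μ v)
    (continuous_gaussianPDFReal μ v).continuousAt

theorem integral_Iic_gaussianPDFReal_le_one (μ : ℝ) {v : NNReal} (hv : v ≠ 0) (u : ℝ) :
    ∫ y in Iic u, gaussianPDFReal μ v y ≤ 1 :=
  (setIntegral_le_integral (integrable_gaussianPDFReal μ v)
    (ae_of_all _ (gaussianPDFReal_nonneg μ v))).trans_eq (integral_gaussianPDFReal_eq_one μ hv)

end GaussianPDFReal

section Phi2

variable {ρ : ℝ}

local notation "φ" => gaussianPDFReal 0 1

theorem phi2_nonneg (ρ x y : ℝ) : 0 ≤ phi2 ρ x y := by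
  unfold phi2
  positivity

theorem phi2_exponent_eq (hρ : |ρ| < 1) (x y : ℝ) :
    -(x^2 - 2*ρ*x*y + y^2) / (2*(1 - ρ^2)) = -x^2/2 + -((y - ρ*x) / √(1 - ρ^2))^2 / 2 := by
  have h := one_sub_sq_pos_of_abs_lt_one hρ
  rw [div_pow, sq_sqrt h.le]
  field_simp
  ring

theorem phi2_eq_mul_gaussianPDFReal (hρ : |ρ| < 1) (x y : ℝ) :
    phi2 ρ x y = φ x * ((√(1 - ρ^2))⁻¹ * φ ((y - ρ*x) / √(1 - ρ^2))) := by
  simp only [phi2, gaussianPDFReal, phi2_exponent_eq hρ, exp_add, NNReal.coe_one, mul_one,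
    sub_zero]
  field_simp
  rw [sq_sqrt (by positivity)]

theorem phi2_le (hρ : |ρ| < 1) (x y : ℝ) :
    phi2 ρ x y ≤ (2 * π * √(1 - ρ^2))⁻¹ * exp (-(1/2) * x^2) := by
  rw [phi2, phi2_exponent_eq hρ]
  gcongr
  linarith [sq_nonneg ((y - ρ*x) / √(1 - ρ^2))]

theorem hasDerivAt_phi2_left (t x : ℝ) :
    HasDerivAt (fun x => phi2 ρ x t) (phi2 ρ x t * ((ρ*t - x) / (1 - ρ^2))) x := by
  have hq : HasDerivAt (fun x => -(x^2 - 2*ρ*x*t + t^2) / (2*(1 - ρ^2)))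
      ((ρ*t - x) / (1 - ρ^2)) x := by
    refine ((((hasDerivAt_id x).fun_pow 2).fun_sub (((hasDerivAt_id x).const_mul (2*ρ)).mul_const
      t)).add_const (t^2)).fun_neg.div_const (2*(1 - ρ^2)) |>.congr_deriv ?_
    rw [← mul_div_mul_left (ρ*t - x) _ (two_ne_zero' ℝ)]
    congr 1
    norm_num
    ring
  exact (hq.exp.const_mul _).congr_deriv (by rw [phi2]; ring)

theorem integral_Iic_phi2 (hρ : |ρ| < 1) (t x : ℝ) :
    ∫ y in Iic t, phi2 ρ x y = φ x * ∫ u in Iic ((t - ρ*x) / √(1 - ρ^2)), φ u := by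
  have hc := sqrt_pos.2 (one_sub_sq_pos_of_abs_lt_one hρ)
  simp_rw [phi2_eq_mul_gaussianPDFReal hρ x]
  rw [integral_const_mul, integral_const_mul, integral_Iic_comp_sub_div _ hc, smul_eq_mul,
    inv_mul_cancel_left₀ hc.ne']

theorem continuous_integral_Iic_phi2 (hρ : |ρ| < 1) (t : ℝ) :
    Continuous fun x => ∫ y in Iic t, phi2 ρ x y := by
  simp_rw [integral_Iic_phi2 hρ t]
  have hΦ : Continuous fun u => ∫ y in Iic u, φ y := continuous_iff_continuousAt.2 fun u =>
    (hasDerivAt_integral_Iic_gaussianPDFReal 0 1 u).continuousAt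
  exact (continuous_gaussianPDFReal 0 1).mul (hΦ.comp (by fun_prop))

theorem integrable_integral_Iic_phi2 (hρ : |ρ| < 1) (t : ℝ) :
    Integrable fun x => ∫ y in Iic t, phi2 ρ x y := by
  refine (integrable_gaussianPDFReal 0 1).mono'
    (continuous_integral_Iic_phi2 hρ t).aestronglyMeasurable (ae_of_all _ fun x => ?_)
  rw [integral_Iic_phi2 hρ, norm_mul, norm_of_nonneg (gaussianPDFReal_nonneg 0 1 x),
    norm_of_nonneg (integral_nonneg (gaussianPDFReal_nonneg 0 1))]
  exact mul_le_of_le_one_right (gaussianPDFReal_nonneg 0 1 x)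
    (integral_Iic_gaussianPDFReal_le_one 0 one_ne_zero _)

theorem hasDerivAt_integral_Iic_phi2 (hρ : |ρ| < 1) (t x : ℝ) :
    HasDerivAt (fun r => ∫ y in Iic t, phi2 r x y) (phi2 ρ x t * ((ρ*t - x) / (1 - ρ^2))) ρ := by
  have hclosed : (fun r => φ x * ∫ u in Iic ((t - r*x) / √(1 - r^2)), φ u)
      =ᶠ[𝓝 ρ] fun r => ∫ y in Iic t, phi2 r x y := by
    filter_upwards [(isOpen_lt continuous_abs continuous_const).mem_nhds hρ] with r hr
    exact (integral_Iic_phi2 hr t x).symm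
  refine ((((hasDerivAt_integral_Iic_gaussianPDFReal 0 1 _).comp ρ
    (hasDerivAt_sub_mul_div_sqrt_one_sub_sq t x hρ)).const_mul (φ x)).congr_of_eventuallyEq
    hclosed.symm).congr_deriv ?_
  rw [phi2_eq_mul_gaussianPDFReal hρ, mul_comm (1 - ρ^2), ← div_div]
  ring

theorem abs_phi2_mul_le {a : ℝ} (ha : a < 1) (hρ : |ρ| ≤ a) (t x : ℝ) :
    |phi2 ρ x t * ((ρ*t - x) / (1 - ρ^2))|
      ≤ (2 * π * √(1 - a^2) * (1 - a^2))⁻¹ * ((|t| + |x|) * exp (-(1/2) * x^2)) := by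
  have hρ1 : |ρ| < 1 := hρ.trans_lt ha
  have h1ρ := one_sub_sq_pos_of_abs_lt_one hρ1
  have h1a := one_sub_sq_pos_of_abs_lt_one ((abs_of_nonneg ((abs_nonneg ρ).trans hρ)).trans_lt ha)
  have haρ : 1 - a^2 ≤ 1 - ρ^2 := by
    rw [← sq_abs ρ]
    nlinarith [abs_nonneg ρ]
  have hnum : |ρ*t - x| ≤ |t| + |x| := by
    refine (abs_sub _ _).trans (add_le_add ?_ le_rfl)
    rw [abs_mul]
    exact mul_le_of_le_one_left (abs_nonneg t) hρ1.le
  rw [abs_mul, abs_div, abs_of_nonneg (phi2_nonneg ρ x t), abs_of_pos h1ρ]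
  calc phi2 ρ x t * (|ρ*t - x| / (1 - ρ^2))
      ≤ (2 * π * √(1 - ρ^2))⁻¹ * exp (-(1/2) * x^2) * ((|t| + |x|) / (1 - ρ^2)) := by
        gcongr
        exact phi2_le hρ1 x t
    _ ≤ (2 * π * √(1 - a^2))⁻¹ * exp (-(1/2) * x^2) * ((|t| + |x|) / (1 - a^2)) := by
        gcongr
    _ = (2 * π * √(1 - a^2) * (1 - a^2))⁻¹ * ((|t| + |x|) * exp (-(1/2) * x^2)) := by
        field_simp

theorem integrable_phi2_left (hρ : |ρ| < 1) (t : ℝ) : Integrable fun x => phi2 ρ x t :=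
  ((integrable_exp_neg_mul_sq (by norm_num : (0:ℝ) < 1/2)).const_mul
    (2 * π * √(1 - ρ^2))⁻¹).mono' (by unfold phi2; fun_prop)
    (ae_of_all _ fun x => (norm_of_nonneg (phi2_nonneg ρ x t)).trans_le (phi2_le hρ x t))

theorem integrable_phi2_mul (hρ : |ρ| < 1) (t : ℝ) :
    Integrable fun x => phi2 ρ x t * ((ρ*t - x) / (1 - ρ^2)) :=
  ((integrable_add_abs_mul_exp_neg_mul_sq t (by norm_num : (0:ℝ) < 1/2)).const_mul
    (2 * π * √(1 - |ρ|^2) * (1 - |ρ|^2))⁻¹).mono' (by unfold phi2; fun_prop)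
    (ae_of_all _ fun x => abs_phi2_mul_le hρ le_rfl t x)

theorem integral_Iic_phi2_mul (hρ : |ρ| < 1) (s t : ℝ) :
    ∫ x in Iic s, phi2 ρ x t * ((ρ*t - x) / (1 - ρ^2)) = phi2 ρ s t := by
  have hderiv : ∀ x ∈ Iic s, HasDerivAt (fun x => phi2 ρ x t) _ x :=
    fun x _ => hasDerivAt_phi2_left t x
  have hint := (integrable_phi2_mul hρ t).integrableOn (s := Iic s)
  rw [integral_Iic_of_hasDerivAt_of_tendsto' hderiv hint
    (tendsto_zero_of_hasDerivAt_of_integrableOn_Iic hderiv hint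
      (integrable_phi2_left hρ t).integrableOn), sub_zero]

end Phi2

/-- Plackett's formula: `∂Φ₂(s,t;ρ)/∂ρ = φ₂(s,t;ρ)` for `|ρ| < 1`. -/
theorem plackett (s t ρ : ℝ) (hρ : |ρ| < 1) :
    HasDerivAt (fun r => Phi2 r s t) (phi2 ρ s t) ρ := by
  obtain ⟨a, hρa, ha⟩ := exists_between hρ
  have hnhds : {r : ℝ | |r| < a} ∈ 𝓝 ρ := (isOpen_lt continuous_abs continuous_const).mem_nhds hρa
  have hdom := hasDerivAt_integral_of_dominated_loc_of_deriv_le (μ := volume.restrict (Iic s))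
    (F := fun r x => ∫ y in Iic t, phi2 r x y)
    (F' := fun r x => phi2 r x t * ((r*t - x) / (1 - r^2))) hnhds
    (by
      filter_upwards [hnhds] with r hr
      exact (continuous_integral_Iic_phi2 (hr.trans ha) t).aestronglyMeasurable)
    (integrable_integral_Iic_phi2 hρ t).restrict
    (integrable_phi2_mul hρ t).aestronglyMeasurable.restrict
    (ae_of_all _ fun x r hr => abs_phi2_mul_le ha (le_of_lt hr) t x)
    ((integrable_add_abs_mul_exp_neg_mul_sq t (by norm_num : (0:ℝ) < 1/2)).const_mul _).restrict
    (ae_of_all _ fun x r hr => hasDerivAt_integral_Iic_phi2 (hr.trans ha) t x)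
  rw [integral_Iic_phi2_mul hρ] at hdom
  exact hdom.2
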